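/- (Differential inequality for the regularized flow) Under the dynamics Ṡ + β∇R(S) + S = M, with R and ∇R as defined, there holds for all t where R(S(t)) > 0: (1/2) d/dt ‖S−M‖_F² + 2βR(S) + (1/2)‖S−M‖_F² ≤ 2β(1+2β)‖M‖_F². -/

import Mathlib

open Matrix BigOperators

noncomputable def frob {m n : ℕ} (A : Matrix (Fin m) (Fin n) ℝ) : ℝ :=
  Real.sqrt (∑ i, ∑ j, (A i j) ^ 2)

noncomputable def finner {m n : ℕ} (A B : Matrix (Fin m) (Fin n) ℝ) : ℝ :=
  (Bᵀ * A).trace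

noncomputable def Rreg {r : ℕ} (S : Matrix (Fin r) (Fin r) ℝ) : ℝ :=
  frob (Sᵀ * S - ((frob S) ^ 2 / (r : ℝ)) • 1)

noncomputable def sv {r : ℕ} (S : Matrix (Fin r) (Fin r) ℝ) (i : Fin r) : ℝ :=
  Real.sqrt ((Matrix.isHermitian_conjTranspose_mul_self S).eigenvalues i)

noncomputable def gradR {r : ℕ} (S : Matrix (Fin r) (Fin r) ℝ) : Matrix (Fin r) (Fin r) ℝ :=
  (2 / Rreg S) • (S * (Sᵀ * S - ((frob S) ^ 2 / (r : ℝ)) • 1))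

attribute [local instance] Matrix.frobeniusNormedAddCommGroup Matrix.frobeniusNormedSpace

/-!
Testing the flow with `S - M` gives
`½ d/dt ‖S - M‖² = -‖S - M‖² - β ⟨∇R(S), S⟩ + β ⟨∇R(S), M⟩`.
Since `SᵀS - α_S² I` is traceless, `⟨∇R(S), S⟩ = 2 R(S)`, which cancels the `2βR(S)` term; and
`‖∇R(S)‖ ≤ 2‖S‖ ≤ 2(‖S - M‖ + ‖M‖)` by submultiplicativity, so Young's inequality absorbs the
last term into `½‖S - M‖²`.

When `R(S) = 0`, Lean's `2 / 0 = 0` makes `∇R(S) = 0`, and both facts about `∇R` still hold.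
-/

section Frobenius

variable {m n : ℕ}

lemma frob_nonneg (A : Matrix (Fin m) (Fin n) ℝ) : 0 ≤ frob A := Real.sqrt_nonneg _

lemma frob_eq_norm (A : Matrix (Fin m) (Fin n) ℝ) : frob A = ‖A‖ := by
  rw [Matrix.frobenius_norm_def, frob, Real.sqrt_eq_rpow, one_div]
  simp only [Real.norm_eq_abs, Real.rpow_two, sq_abs]

lemma finner_eq_sum (A B : Matrix (Fin m) (Fin n) ℝ) :
    finner A B = ∑ i, ∑ j, A i j * B i j := by
  rw [finner, Matrix.trace, Finset.sum_comm]
  simp only [Matrix.diag_apply, Matrix.mul_apply, Matrix.transpose_apply, mul_comm]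

lemma finner_self (A : Matrix (Fin m) (Fin n) ℝ) : finner A A = frob A ^ 2 := by
  rw [finner_eq_sum, frob, Real.sq_sqrt (by positivity)]
  simp only [sq]

lemma finner_smul_left (c : ℝ) (A B : Matrix (Fin m) (Fin n) ℝ) :
    finner (c • A) B = c * finner A B := by
  rw [finner, finner, Matrix.mul_smul, Matrix.trace_smul, smul_eq_mul]

lemma finner_le_frob_mul_frob (A B : Matrix (Fin m) (Fin n) ℝ) :
    finner A B ≤ frob A * frob B := by
  rw [finner_eq_sum, frob, frob, ← Fintype.sum_prod_type' (f := fun i j => A i j * B i j),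
    ← Fintype.sum_prod_type' (f := fun i j => A i j ^ 2),
    ← Fintype.sum_prod_type' (f := fun i j => B i j ^ 2)]
  exact Real.sum_mul_le_sqrt_mul_sqrt _ _ _

lemma finner_sub_sub_sub_smul (β : ℝ) (A M G : Matrix (Fin m) (Fin n) ℝ) :
    finner (A - M) (M - A - β • G) = -frob (A - M) ^ 2 - β * finner G A + β * finner G M := by
  simp only [← finner_self, finner_eq_sum, Matrix.sub_apply, Matrix.smul_apply, smul_eq_mul,
    Finset.mul_sum, ← Finset.sum_neg_distrib, ← Finset.sum_sub_distrib, ← Finset.sum_add_distrib]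
  exact Finset.sum_congr rfl fun i _ => Finset.sum_congr rfl fun j _ => by ring

lemma frob_le_frob_sub_add (A M : Matrix (Fin m) (Fin n) ℝ) : frob A ≤ frob (A - M) + frob M := by
  simpa only [frob_eq_norm] using norm_le_norm_sub_add A M

lemma hasDerivAt_frob_sq {S : ℝ → Matrix (Fin m) (Fin n) ℝ} {S' : Matrix (Fin m) (Fin n) ℝ}
    {t : ℝ} (h : HasDerivAt S S' t) :
    HasDerivAt (fun τ => frob (S τ) ^ 2) (2 * finner (S t) S') t := by
  have hentry (i : Fin m) (j : Fin n) : HasDerivAt (fun τ => S τ i j) (S' i j) t :=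
    (entryLinearMap ℝ ℝ i j).toContinuousLinearMap.hasFDerivAt.comp_hasDerivAt t h
  simp only [← finner_self, finner_eq_sum, Finset.mul_sum]
  refine HasDerivAt.fun_sum fun i _ => HasDerivAt.fun_sum fun j _ => ?_
  exact ((hentry i j).fun_mul (hentry i j)).congr_deriv (by ring)

end Frobenius

section Regularizer

variable {r : ℕ}

noncomputable def gramDeviation (S : Matrix (Fin r) (Fin r) ℝ) : Matrix (Fin r) (Fin r) ℝ :=
  Sᵀ * S - ((frob S) ^ 2 / (r : ℝ)) • 1

lemma Rreg_eq_frob_gramDeviation (S : Matrix (Fin r) (Fin r) ℝ) :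
    Rreg S = frob (gramDeviation S) := rfl

lemma Rreg_nonneg (S : Matrix (Fin r) (Fin r) ℝ) : 0 ≤ Rreg S := frob_nonneg _

lemma gradR_eq_smul_mul_gramDeviation (S : Matrix (Fin r) (Fin r) ℝ) :
    gradR S = (2 / Rreg S) • (S * gramDeviation S) := rfl

lemma gramDeviation_transpose (S : Matrix (Fin r) (Fin r) ℝ) :
    (gramDeviation S)ᵀ = gramDeviation S := by
  simp [gramDeviation, Matrix.transpose_sub, Matrix.transpose_mul, Matrix.transpose_smul]

lemma trace_gramDeviation (S : Matrix (Fin r) (Fin r) ℝ) : (gramDeviation S).trace = 0 := by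
  rcases eq_or_ne r 0 with rfl | hr
  · exact Matrix.trace_fin_zero _
  have htr : (Sᵀ * S).trace = frob S ^ 2 := finner_self S
  rw [gramDeviation, Matrix.trace_sub, Matrix.trace_smul, Matrix.trace_one, htr,
    Fintype.card_fin, smul_eq_mul, div_mul_cancel₀ _ (Nat.cast_ne_zero.mpr hr), sub_self]

lemma finner_mul_gramDeviation_self (S : Matrix (Fin r) (Fin r) ℝ) :
    finner (S * gramDeviation S) S = Rreg S ^ 2 := by
  set E := gramDeviation S
  have hgram : Sᵀ * S = E + (frob S ^ 2 / (r : ℝ)) • 1 := (sub_add_cancel _ _).symm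
  calc finner (S * E) S = ((Sᵀ * S) * E).trace := by rw [finner, Matrix.mul_assoc]
    _ = (Eᵀ * E).trace := by
      rw [hgram, Matrix.add_mul, Matrix.trace_add, Matrix.smul_mul, Matrix.one_mul,
        Matrix.trace_smul, trace_gramDeviation, smul_zero, add_zero, gramDeviation_transpose]
    _ = Rreg S ^ 2 := finner_self E

lemma finner_gradR_self (S : Matrix (Fin r) (Fin r) ℝ) : finner (gradR S) S = 2 * Rreg S := by
  rw [gradR_eq_smul_mul_gramDeviation, finner_smul_left, finner_mul_gramDeviation_self]
  rcases eq_or_ne (Rreg S) 0 with h | h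
  · simp [h]
  · field_simp

lemma frob_gradR_le (S : Matrix (Fin r) (Fin r) ℝ) : frob (gradR S) ≤ 2 * frob S := by
  rw [gradR_eq_smul_mul_gramDeviation, frob_eq_norm, norm_smul, ← frob_eq_norm,
    Real.norm_eq_abs, abs_div, abs_two, abs_of_nonneg (Rreg_nonneg S)]
  rcases eq_or_ne (Rreg S) 0 with h | h
  · simp [h, frob_eq_norm]
  calc 2 / Rreg S * frob (S * gramDeviation S)
      ≤ 2 / Rreg S * (frob S * frob (gramDeviation S)) := by
        refine mul_le_mul_of_nonneg_left ?_ (div_nonneg zero_le_two (Rreg_nonneg S))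
        simpa only [frob_eq_norm] using Matrix.frobenius_norm_mul S (gramDeviation S)
    _ = 2 * frob S := by rw [← Rreg_eq_frob_gramDeviation]; field_simp

end Regularizer

theorem stmt13_general {r : ℕ} (β t : ℝ) (hβ : 0 < β) (M : Matrix (Fin r) (Fin r) ℝ)
    (S : ℝ → Matrix (Fin r) (Fin r) ℝ)
    (hode : HasDerivAt S (M - S t - β • gradR (S t)) t)
    (d : ℝ) (hd : HasDerivAt (fun τ => frob (S τ - M) ^ 2) d t) :
    (1 / 2) * d + 2 * β * Rreg (S t) + (1 / 2) * frob (S t - M) ^ 2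
      ≤ 2 * β * (1 + 2 * β) * frob M ^ 2 := by
  set G := gradR (S t)
  have hd_eq : d = 2 * finner (S t - M) (M - S t - β • G) :=
    hd.unique (hasDerivAt_frob_sq (hode.sub_const M))
  have hGM : finner G M ≤ 2 * (frob (S t - M) + frob M) * frob M :=
    calc finner G M ≤ frob G * frob M := finner_le_frob_mul_frob G M
      _ ≤ 2 * (frob (S t - M) + frob M) * frob M := by
        gcongr
        · exact frob_nonneg M
        · exact (frob_gradR_le (S t)).trans (by linarith [frob_le_frob_sub_add (S t) M])
  rw [hd_eq, finner_sub_sub_sub_smul, finner_gradR_self]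
  nlinarith [mul_le_mul_of_nonneg_left hGM hβ.le, sq_nonneg (frob (S t - M) - 2 * β * frob M),
    sq_nonneg (β * frob M)]

theorem stmt13 {r : ℕ} (β t : ℝ) (hβ : 0 < β) (M : Matrix (Fin r) (Fin r) ℝ)
    (S : ℝ → Matrix (Fin r) (Fin r) ℝ)
    (hpos : 0 < Rreg (S t))
    (hode : HasDerivAt S (M - S t - β • gradR (S t)) t)
    (d : ℝ) (hd : HasDerivAt (fun τ => frob (S τ - M) ^ 2) d t) :
    (1 / 2) * d + 2 * β * Rreg (S t) + (1 / 2) * frob (S t - M) ^ 2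
      ≤ 2 * β * (1 + 2 * β) * frob M ^ 2 :=
  stmt13_general β t hβ M S hode d hd
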